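/- Let n ≥ 2, d ≥ 1, let x ∈ ℂ^{n+1} be nonzero, and let V ≠ V' be two distinct 2-dimensional linear subspaces of ℂ^{n+1} both containing x. If a linear subspace T ⊆ S^d_x contains a subspace H of codimension at most 1 in I_V(d) and a subspace H' of codimension at most 1 in I_{V'}(d), then T has codimension at most 2 in S^d_x. (Hence a subspace of codimension at least 3 in S^d_x cannot contain hyperplanes of the ideals of two distinct lines through x.) -/

import Mathlib

open MvPolynomial

/-- The codimension of `A ⊓ B` inside `B`, i.e. `dim (B / (A ∩ B))`. -/
noncomputable def relCodim {M : Type*} [AddCommGroup M] [Module ℂ M]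
    (A B : Submodule ℂ M) : ℕ :=
  Module.finrank ℂ (↥B ⧸ (A ⊓ B).comap B.subtype)

/-- `S^d_x`: the degree-`d` forms in `n+1` variables vanishing at `x`. -/
noncomputable def SdxSubmodule (n d : ℕ) (x : Fin (n + 1) → ℂ) :
    Submodule ℂ (MvPolynomial (Fin (n + 1)) ℂ) :=
  MvPolynomial.homogeneousSubmodule (Fin (n + 1)) ℂ d ⊓
    LinearMap.ker (MvPolynomial.aeval (R := ℂ) x).toLinearMap

/-- `I_V(d)`: the degree-`d` forms vanishing identically on the 2-plane `V`. -/
noncomputable def IVSubmodule (n d : ℕ) (V : Submodule ℂ (Fin (n + 1) → ℂ)) :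
    Submodule ℂ (MvPolynomial (Fin (n + 1)) ℂ) :=
  MvPolynomial.homogeneousSubmodule (Fin (n + 1)) ℂ d ⊓
    ⨅ u ∈ V, LinearMap.ker (MvPolynomial.aeval (R := ℂ) u).toLinearMap

/-! ### Auxiliary linear algebra lemmas -/

set_option maxHeartbeats 1000000 in
lemma aux_fd_homog (k d : ℕ) :
    FiniteDimensional ℂ (homogeneousSubmodule (Fin k) ℂ d) := by
  have hle : homogeneousSubmodule (Fin k) ℂ d ≤ restrictTotalDegree (Fin k) ℂ d :=
    fun p hp => (mem_restrictTotalDegree _ _ _).mpr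
      (MvPolynomial.IsHomogeneous.totalDegree_le hp)
  exact Submodule.finiteDimensional_of_le hle

lemma aux_finrank_le_of_surj {M N : Type*} [AddCommGroup M] [Module ℂ M]
    [AddCommGroup N] [Module ℂ N] [Module.Finite ℂ M]
    (f : M →ₗ[ℂ] N) (h : Function.Surjective f) :
    Module.finrank ℂ N ≤ Module.finrank ℂ M := by
  have h1 := LinearMap.finrank_range_le f
  rwa [LinearMap.range_eq_top.mpr h, finrank_top] at h1

lemma aux_relCodim_anti {M : Type*} [AddCommGroup M] [Module ℂ M]
    (A B S : Submodule ℂ M) [FiniteDimensional ℂ S] (h : A ≤ B) :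
    relCodim B S ≤ relCodim A S := by
  set p := (A ⊓ S).comap S.subtype
  set q := (B ⊓ S).comap S.subtype
  have hpq : p ≤ q := Submodule.comap_mono (inf_le_inf_right _ h)
  have hle : p ≤ q.comap (LinearMap.id : ↥S →ₗ[ℂ] ↥S) := hpq
  refine aux_finrank_le_of_surj (Submodule.mapQ p q LinearMap.id hle) ?_
  intro z
  obtain ⟨y, rfl⟩ := Submodule.mkQ_surjective q z
  refine ⟨p.mkQ y, ?_⟩
  rw [Submodule.mkQ_apply, Submodule.mapQ_apply, LinearMap.id_apply]
  rfl

lemma aux_relCodim_sup_le {M : Type*} [AddCommGroup M] [Module ℂ M]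
    (A B S H H' : Submodule ℂ M)
    [FiniteDimensional ℂ A] [FiniteDimensional ℂ B]
    (hA : A ≤ S) (hB : B ≤ S) (hS : S ≤ A ⊔ B) :
    relCodim (H ⊔ H') S ≤ relCodim H A + relCodim H' B := by
  set K := ((H ⊔ H') ⊓ S).comap S.subtype
  set KA := (H ⊓ A).comap A.subtype
  set KB := (H' ⊓ B).comap B.subtype
  set fA : ↥A →ₗ[ℂ] ↥S ⧸ K := K.mkQ.comp (Submodule.inclusion hA) with hfA
  set fB : ↥B →ₗ[ℂ] ↥S ⧸ K := K.mkQ.comp (Submodule.inclusion hB) with hfB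
  have hkerA : KA ≤ LinearMap.ker fA := by
    intro z hz
    have hmem := Submodule.mem_comap.mp hz
    rw [Submodule.mem_inf] at hmem
    simp only [hfA, LinearMap.mem_ker, LinearMap.comp_apply, Submodule.mkQ_apply,
      Submodule.Quotient.mk_eq_zero]
    exact Submodule.mem_comap.mpr
      (Submodule.mem_inf.mpr ⟨le_sup_left (a := H) (b := H') hmem.1, hA z.2⟩)
  have hkerB : KB ≤ LinearMap.ker fB := by
    intro z hz
    have hmem := Submodule.mem_comap.mp hz
    rw [Submodule.mem_inf] at hmem
    simp only [hfB, LinearMap.mem_ker, LinearMap.comp_apply, Submodule.mkQ_apply,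
      Submodule.Quotient.mk_eq_zero]
    exact Submodule.mem_comap.mpr
      (Submodule.mem_inf.mpr ⟨le_sup_right (a := H) (b := H') hmem.1, hB z.2⟩)
  set gA := KA.liftQ fA hkerA
  set gB := KB.liftQ fB hkerB
  have hsurj : Function.Surjective (gA.coprod gB) := by
    intro z
    obtain ⟨⟨s, hsS⟩, rfl⟩ := Submodule.mkQ_surjective K z
    obtain ⟨a, haA, b, hbB, hab⟩ := Submodule.mem_sup.mp (hS hsS)
    refine ⟨(KA.mkQ ⟨a, haA⟩, KB.mkQ ⟨b, hbB⟩), ?_⟩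
    have : (gA.coprod gB) (KA.mkQ ⟨a, haA⟩, KB.mkQ ⟨b, hbB⟩)
        = K.mkQ (Submodule.inclusion hA ⟨a, haA⟩) + K.mkQ (Submodule.inclusion hB ⟨b, hbB⟩) := by
      simp [gA, gB, Submodule.liftQ_apply, hfA, hfB]
    rw [this, ← map_add]
    congr 1
    exact Subtype.ext hab
  have hfin : Module.finrank ℂ (↥S ⧸ K)
      ≤ Module.finrank ℂ ((↥A ⧸ KA) × (↥B ⧸ KB)) :=
    aux_finrank_le_of_surj _ hsurj
  calc relCodim (H ⊔ H') S = Module.finrank ℂ (↥S ⧸ K) := rfl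
    _ ≤ Module.finrank ℂ ((↥A ⧸ KA) × (↥B ⧸ KB)) := hfin
    _ = relCodim H A + relCodim H' B := Module.finrank_prod

/-! ### Polynomial lemmas -/

lemma aux_aeval_smul {k d : ℕ} {F : MvPolynomial (Fin k) ℂ} (hF : F.IsHomogeneous d)
    (s : ℂ) (u : Fin k → ℂ) :
    MvPolynomial.aeval (s • u) F = s ^ d * MvPolynomial.aeval u F := by
  conv_lhs => rw [F.as_sum]
  conv_rhs => rw [F.as_sum]
  rw [map_sum, map_sum, Finset.mul_sum]
  refine Finset.sum_congr rfl fun m hm => ?_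
  rw [aeval_monomial, aeval_monomial]
  have hsum : (∑ i ∈ m.support, m i) = d := by
    have h := hF (mem_support_iff.mp hm)
    simpa [Finsupp.weight_apply, Finsupp.sum] using h
  have hprod : (m.prod fun i k => (s • u) i ^ k)
      = s ^ d * m.prod fun i k => u i ^ k := by
    rw [Finsupp.prod, Finsupp.prod, ← hsum, ← Finset.prod_pow_eq_pow_sum,
      ← Finset.prod_mul_distrib]
    refine Finset.prod_congr rfl fun i _ => ?_
    rw [Pi.smul_apply, smul_eq_mul, mul_pow]
  rw [hprod]
  ring

/-- The linear polynomial attached to a linear functional. -/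
noncomputable def linPoly {k : ℕ} (μ : (Fin k → ℂ) →ₗ[ℂ] ℂ) : MvPolynomial (Fin k) ℂ :=
  ∑ j, MvPolynomial.C (μ (Pi.single j 1)) * MvPolynomial.X j

lemma linPoly_isHomogeneous {k : ℕ} (μ : (Fin k → ℂ) →ₗ[ℂ] ℂ) :
    (linPoly μ).IsHomogeneous 1 :=
  MvPolynomial.IsHomogeneous.sum _ _ _ fun j _ =>
    (MvPolynomial.isHomogeneous_X _ _).C_mul _

lemma aeval_linPoly {k : ℕ} (μ : (Fin k → ℂ) →ₗ[ℂ] ℂ) (u : Fin k → ℂ) :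
    MvPolynomial.aeval u (linPoly μ) = μ u := by
  rw [linPoly, map_sum, LinearMap.pi_apply_eq_sum_univ μ u]
  refine Finset.sum_congr rfl fun j _ => ?_
  simp only [map_mul, aeval_C, aeval_X, smul_eq_mul, Algebra.algebraMap_self, RingHom.id_apply]
  rw [mul_comm]
  congr 2
  funext j'
  simp [Pi.single_apply, eq_comm]

lemma mem_IV_iff {n d : ℕ} {V : Submodule ℂ (Fin (n + 1) → ℂ)}
    {F : MvPolynomial (Fin (n + 1)) ℂ} :
    F ∈ IVSubmodule n d V ↔ F.IsHomogeneous d ∧ ∀ u ∈ V, MvPolynomial.aeval u F = 0 := by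
  simp [IVSubmodule, Submodule.mem_inf, Submodule.mem_iInf, LinearMap.mem_ker]

lemma mem_Sdx_iff {n d : ℕ} {x : Fin (n + 1) → ℂ}
    {F : MvPolynomial (Fin (n + 1)) ℂ} :
    F ∈ SdxSubmodule n d x ↔ F.IsHomogeneous d ∧ MvPolynomial.aeval x F = 0 := by
  simp [SdxSubmodule, Submodule.mem_inf, LinearMap.mem_ker]

lemma IV_le_Sdx {n d : ℕ} {x : Fin (n + 1) → ℂ} {V : Submodule ℂ (Fin (n + 1) → ℂ)}
    (hxV : x ∈ V) : IVSubmodule n d V ≤ SdxSubmodule n d x := fun F hF => by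
  obtain ⟨h1, h2⟩ := mem_IV_iff.mp hF
  exact mem_Sdx_iff.mpr ⟨h1, h2 x hxV⟩

/-! ### The key decomposition -/

lemma Sdx_le_sup (n d : ℕ)
    (x : Fin (n + 1) → ℂ) (hx : x ≠ 0)
    (V V' : Submodule ℂ (Fin (n + 1) → ℂ))
    (hV : Module.finrank ℂ V = 2) (hV' : Module.finrank ℂ V' = 2)
    (hne : V ≠ V') (hxV : x ∈ V) (hxV' : x ∈ V') :
    SdxSubmodule n d x ≤ IVSubmodule n d V ⊔ IVSubmodule n d V' := by
  classical
  -- choose y ∈ V not in span {x}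
  obtain ⟨y, hyV, hyx⟩ : ∃ y ∈ V, y ∉ Submodule.span ℂ {x} := by
    by_contra hcon
    push_neg at hcon
    have hle : V ≤ Submodule.span ℂ {x} := hcon
    have := Submodule.finrank_mono hle
    rw [hV, finrank_span_singleton hx] at this
    omega
  -- choose y' ∈ V' not in V
  obtain ⟨y', hy'V', hy'V⟩ : ∃ y' ∈ V', y' ∉ V := by
    by_contra hcon
    push_neg at hcon
    exact hne (Submodule.eq_of_le_of_finrank_le hcon (by rw [hV, hV'])).symm
  have hyx' : ∀ a : ℂ, a • x ≠ y := by
    intro a ha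
    exact hyx (ha ▸ Submodule.smul_mem _ a (Submodule.mem_span_singleton_self x))
  -- linear independence
  have li2 : LinearIndependent ℂ ![y, x] := by
    rw [linearIndependent_fin2]
    refine ⟨hx, fun a ha => hyx' a (by simpa using ha)⟩
  have hspanV : Submodule.span ℂ (Set.range ![y, x]) = V := by
    have hle : Submodule.span ℂ (Set.range ![y, x]) ≤ V := by
      rw [Submodule.span_le]
      rintro - ⟨i, rfl⟩
      fin_cases i <;> simpa using (by first | exact hyV | exact hxV)
    have hfr : Module.finrank ℂ (Submodule.span ℂ (Set.range ![y, x])) = 2 := by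
      rw [finrank_span_eq_card li2, Fintype.card_fin]
    exact Submodule.eq_of_le_of_finrank_le hle (by rw [hV, hfr])
  have hy'x : ∀ a : ℂ, a • x ≠ y' := by
    intro a ha
    exact hy'V (ha ▸ Submodule.smul_mem _ a hxV)
  have li2' : LinearIndependent ℂ ![y', x] := by
    rw [linearIndependent_fin2]
    refine ⟨hx, fun a ha => hy'x a (by simpa using ha)⟩
  have hspanV' : Submodule.span ℂ (Set.range ![y', x]) = V' := by
    have hle : Submodule.span ℂ (Set.range ![y', x]) ≤ V' := by
      rw [Submodule.span_le]
      rintro - ⟨i, rfl⟩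
      fin_cases i <;> simpa using (by first | exact hy'V' | exact hxV')
    have hfr : Module.finrank ℂ (Submodule.span ℂ (Set.range ![y', x])) = 2 := by
      rw [finrank_span_eq_card li2', Fintype.card_fin]
    exact Submodule.eq_of_le_of_finrank_le hle (by rw [hV', hfr])
  have li3 : LinearIndependent ℂ ![y', y, x] := by
    have : y' ∉ Submodule.span ℂ (Set.range ![y, x]) := by rw [hspanV]; exact hy'V
    exact linearIndependent_fin_cons.mpr ⟨li2, this⟩
  -- dual functionals via basis extension
  have hLIs : LinearIndepOn ℂ id (Set.range ![y', y, x]) :=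
    (linearIndepOn_id_range_iff li3.injective).mpr li3
  set s : Set (Fin (n + 1) → ℂ) := Set.range ![y', y, x] with hs
  have hxs : x ∈ s := ⟨2, rfl⟩
  have hy's : y' ∈ s := ⟨0, rfl⟩
  set B := Module.Basis.extend hLIs with hB
  have hsub : s ⊆ hLIs.extend (Set.subset_univ s) := hLIs.subset_extend _
  set ix : hLIs.extend (Set.subset_univ s) := ⟨x, hsub hxs⟩
  set iy' : hLIs.extend (Set.subset_univ s) := ⟨y', hsub hy's⟩
  set μ : (Fin (n + 1) → ℂ) →ₗ[ℂ] ℂ := B.coord ix with hμdef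
  set ν : (Fin (n + 1) → ℂ) →ₗ[ℂ] ℂ := B.coord iy' with hνdef
  have hBself : ∀ (v : Fin (n + 1) → ℂ) (hv : v ∈ hLIs.extend (Set.subset_univ s)),
      B ⟨v, hv⟩ = v := fun v hv => Module.Basis.extend_apply_self hLIs ⟨v, hv⟩
  have hcoord : ∀ (i j : hLIs.extend (Set.subset_univ s)),
      B.coord i (B j) = if j = i then 1 else 0 := by
    intro i j
    rw [Module.Basis.coord_apply, Module.Basis.repr_self, Finsupp.single_apply]
  have hxy : x ≠ y := fun h => hyx (h ▸ Submodule.mem_span_singleton_self x)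
  have hxy' : x ≠ y' := fun h => hy'V (h ▸ hxV)
  have hyy' : y ≠ y' := fun h => hy'V (h ▸ hyV)
  have hμx : μ x = 1 := by
    have := hcoord ix ix
    rwa [hBself x (hsub hxs), if_pos rfl] at this
  have hμy : μ y = 0 := by
    have hys : y ∈ s := ⟨1, rfl⟩
    have := hcoord ix ⟨y, hsub hys⟩
    rwa [hBself y (hsub hys), if_neg (fun h => hxy (congrArg Subtype.val h).symm)] at this
  have hμy' : μ y' = 0 := by
    have := hcoord ix iy'
    rwa [hBself y' (hsub hy's),
      if_neg (fun h => hxy' (show y' = x from congrArg Subtype.val h).symm)] at this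
  have hνx : ν x = 0 := by
    have := hcoord iy' ix
    rwa [hBself x (hsub hxs),
      if_neg (fun h => hxy' (show x = y' from congrArg Subtype.val h))] at this
  have hνy : ν y = 0 := by
    have hys : y ∈ s := ⟨1, rfl⟩
    have := hcoord iy' ⟨y, hsub hys⟩
    rwa [hBself y (hsub hys),
      if_neg (fun h => hyy' (show y = y' from congrArg Subtype.val h))] at this
  have hνy' : ν y' = 1 := by
    have := hcoord iy' iy'
    rwa [hBself y' (hsub hy's), if_pos rfl] at this
  -- main decomposition
  intro F hF
  obtain ⟨hFhom, hFx⟩ := mem_Sdx_iff.mp hF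
  set g : Fin (n + 1) → MvPolynomial (Fin 2) ℂ :=
    fun j => MvPolynomial.C (x j) * MvPolynomial.X 0 + MvPolynomial.C (y' j) * MvPolynomial.X 1
    with hg
  set f' : MvPolynomial (Fin 2) ℂ := MvPolynomial.aeval g F with hf'
  have hghom : ∀ j, (g j).IsHomogeneous 1 := fun j =>
    ((MvPolynomial.isHomogeneous_X _ _).C_mul _).add
      ((MvPolynomial.isHomogeneous_X _ _).C_mul _)
  have hf'hom : f'.IsHomogeneous d := by
    have := hFhom.aeval g hghom
    rwa [one_mul] at this
  have hf'eval : ∀ a b : ℂ,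
      MvPolynomial.aeval ![a, b] f' = MvPolynomial.aeval (a • x + b • y') F := by
    intro a b
    have hfun : (fun j => MvPolynomial.aeval ![a, b] (g j)) = a • x + b • y' := by
      funext j
      simp only [hg, map_add, map_mul, aeval_C, aeval_X, Matrix.cons_val_zero,
        Matrix.cons_val_one, Matrix.head_cons, Pi.add_apply, Pi.smul_apply, smul_eq_mul,
        Algebra.algebraMap_self, RingHom.id_apply]
      ring
    rw [hf', comp_aeval_apply, hfun]
  set Q : MvPolynomial (Fin (n + 1)) ℂ :=
    ∑ m ∈ f'.support, (MvPolynomial.coeff m f') • ((linPoly μ) ^ (m 0) * (linPoly ν) ^ (m 1))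
    with hQ
  have hmd : ∀ m ∈ f'.support, m 0 + m 1 = d := by
    intro m hm
    have h := hf'hom (mem_support_iff.mp hm)
    have h2 : (∑ i ∈ m.support, m i) = d := by
      simpa [Finsupp.weight_apply, Finsupp.sum] using h
    rw [← h2, Finset.sum_subset (Finset.subset_univ m.support)
      (fun i _ hi => Finsupp.notMem_support_iff.mp hi), Fin.sum_univ_two]
  have hQhom : Q.IsHomogeneous d := by
    refine MvPolynomial.IsHomogeneous.sum _ _ _ fun m hm => ?_
    rw [smul_eq_C_mul]
    have h1 : ((linPoly μ) ^ (m 0) * (linPoly ν) ^ (m 1)).IsHomogeneous (m 0 + m 1) := by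
      have := ((linPoly_isHomogeneous μ).pow (m 0)).mul ((linPoly_isHomogeneous ν).pow (m 1))
      simpa using this
    rw [← hmd m hm]
    exact h1.C_mul _
  have hQeval : ∀ u : Fin (n + 1) → ℂ,
      MvPolynomial.aeval u Q = MvPolynomial.aeval ![μ u, ν u] f' := by
    intro u
    conv_rhs => rw [f'.as_sum]
    rw [hQ, map_sum, map_sum]
    refine Finset.sum_congr rfl fun m _ => ?_
    rw [smul_eq_C_mul, map_mul, map_mul, map_pow, map_pow, aeval_C,
      aeval_linPoly, aeval_linPoly, aeval_monomial]
    have : (m.prod fun i k => (![μ u, ν u]) i ^ k) = (μ u) ^ (m 0) * (ν u) ^ (m 1) := by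
      rw [Finsupp.prod_fintype _ _ (fun i => pow_zero _), Fin.prod_univ_two]
      simp
    rw [this]
  -- Q vanishes on V
  have hQV : Q ∈ IVSubmodule n d V := by
    refine mem_IV_iff.mpr ⟨hQhom, fun u hu => ?_⟩
    rw [← hspanV] at hu
    obtain ⟨c, hc⟩ := (Submodule.mem_span_range_iff_exists_fun ℂ).mp hu
    rw [Fin.sum_univ_two] at hc
    simp only [Matrix.cons_val_zero, Matrix.cons_val_one, Matrix.head_cons] at hc
    have hμu : μ u = c 1 := by
      rw [← hc]; simp [map_add, map_smul, hμy, hμx]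
    have hνu : ν u = 0 := by
      rw [← hc]; simp [map_add, map_smul, hνy, hνx]
    rw [hQeval u, hμu, hνu, hf'eval]
    have : c 1 • x + (0 : ℂ) • y' = (c 1) • x := by simp
    rw [this, aux_aeval_smul hFhom, hFx, mul_zero]
  -- F - Q vanishes on V'
  have hFQ : F - Q ∈ IVSubmodule n d V' := by
    refine mem_IV_iff.mpr ⟨hFhom.sub hQhom, fun u hu => ?_⟩
    rw [← hspanV'] at hu
    obtain ⟨c, hc⟩ := (Submodule.mem_span_range_iff_exists_fun ℂ).mp hu
    rw [Fin.sum_univ_two] at hc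
    simp only [Matrix.cons_val_zero, Matrix.cons_val_one, Matrix.head_cons] at hc
    have hμu : μ u = c 1 := by
      rw [← hc]; simp [map_add, map_smul, hμy', hμx]
    have hνu : ν u = c 0 := by
      rw [← hc]; simp [map_add, map_smul, hνy', hνx]
    rw [map_sub, hQeval u, hμu, hνu, hf'eval]
    have : c 1 • x + c 0 • y' = u := by rw [← hc]; module
    rw [this, sub_self]
  exact Submodule.mem_sup.mpr ⟨Q, hQV, F - Q, hFQ, by ring⟩

/-- a subspace `T ⊆ S^d_x` containing hyperplanes (codimension ≤ 1 subspaces)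
of the degree-`d` parts of the ideals of two distinct lines through `x` has codimension
at most 2 in `S^d_x`. -/
theorem codim_le_two_of_contains_two_line_ideal_hyperplanes
    (n d : ℕ) (hn : 2 ≤ n) (hd : 1 ≤ d)
    (x : Fin (n + 1) → ℂ) (hx : x ≠ 0)
    (V V' : Submodule ℂ (Fin (n + 1) → ℂ))
    (hV : Module.finrank ℂ V = 2) (hV' : Module.finrank ℂ V' = 2)
    (hne : V ≠ V') (hxV : x ∈ V) (hxV' : x ∈ V')
    (T H H' : Submodule ℂ (MvPolynomial (Fin (n + 1)) ℂ))
    (hTSx : T ≤ SdxSubmodule n d x)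
    (hHIV : H ≤ IVSubmodule n d V) (hHT : H ≤ T)
    (hHcodim : relCodim H (IVSubmodule n d V) ≤ 1)
    (hH'IV' : H' ≤ IVSubmodule n d V') (hH'T : H' ≤ T)
    (hH'codim : relCodim H' (IVSubmodule n d V') ≤ 1) :
    relCodim T (SdxSubmodule n d x) ≤ 2 := by
  haveI hfd := aux_fd_homog (n + 1) d
  haveI : FiniteDimensional ℂ (SdxSubmodule n d x) :=
    Submodule.finiteDimensional_of_le (inf_le_left)
  haveI : FiniteDimensional ℂ (IVSubmodule n d V) :=
    Submodule.finiteDimensional_of_le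
      (show IVSubmodule n d V ≤ homogeneousSubmodule (Fin (n + 1)) ℂ d from inf_le_left)
  haveI : FiniteDimensional ℂ (IVSubmodule n d V') :=
    Submodule.finiteDimensional_of_le
      (show IVSubmodule n d V' ≤ homogeneousSubmodule (Fin (n + 1)) ℂ d from inf_le_left)
  have h1 : relCodim T (SdxSubmodule n d x) ≤ relCodim (H ⊔ H') (SdxSubmodule n d x) :=
    aux_relCodim_anti _ _ _ (sup_le hHT hH'T)
  have h2 : relCodim (H ⊔ H') (SdxSubmodule n d x)
      ≤ relCodim H (IVSubmodule n d V) + relCodim H' (IVSubmodule n d V') :=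
    aux_relCodim_sup_le _ _ _ _ _ (IV_le_Sdx hxV) (IV_le_Sdx hxV')
      (Sdx_le_sup n d x hx V V' hV hV' hne hxV hxV')
  omega
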